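/- arXiv:1712.01452 — 2 statements merged into one kernel-verified Lean document; each statement's English description precedes it below -/
import Mathlib

section
/- For any real number r and positive integer p, and for each k = 1, 2, ..., p, Σ_{i=0}^p (r+i)^k · C(-r, i) · C(r+p, p-i) = 0. -/
/-!
Writing `C(-r, i)` and `C(r + p, p - i)` as rising products, the `i`-th summand becomes
`(r + i)^(k-1)` times `(-1)^i C(p, i) · r (r + 1) ⋯ (r + p) / p!`: the factor `r + i` missing
from `C(-r, i) C(r + p, p - i)` is supplied by one power of `r + i`. The sum is therefore a
multiple of `∑ (-1)^i C(p, i) (r + i)^(k-1)`, which is, up to sign, the `p`-th forward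
difference of a polynomial of degree `k - 1 < p`.
-/

open Finset

/-- Generalized binomial coefficient `C(r, k)` for real `r`. -/
noncomputable def genChoose (r : ℝ) (k : ℕ) : ℝ :=
  (∏ j ∈ Finset.range k, (r - j)) / (k.factorial : ℝ)

theorem sum_range_neg_one_pow_mul_choose_mul_pow_eq_zero {R : Type*} [CommRing R] {j n : ℕ}
    (h : j < n) (y : R) :
    ∑ i ∈ range (n + 1), (-1) ^ i * (n.choose i : R) * (y + i) ^ j = 0 := by
  have hdiff := congr_fun (fwdDiff_iter_pow_eq_zero_of_lt (R := R) h) y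
  rw [fwdDiff_iter_eq_sum_shift] at hdiff
  calc ∑ i ∈ range (n + 1), (-1) ^ i * (n.choose i : R) * (y + i) ^ j
      = (-1) ^ n * ∑ i ∈ range (n + 1),
          (((-1 : ℤ) ^ (n - i) * n.choose i) • (y + i • (1 : R)) ^ j) := by
        rw [mul_sum]
        refine sum_congr rfl fun i hi ↦ ?_
        obtain ⟨m, rfl⟩ := Nat.exists_eq_add_of_le (mem_range_succ_iff.mp hi)
        simp only [Nat.add_sub_cancel_left, nsmul_one, zsmul_eq_mul]
        push_cast
        have hsq : ((-1 : R) ^ m) * (-1) ^ m = 1 := by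
          rw [← mul_pow, neg_one_mul, neg_neg, one_pow]
        linear_combination (-((i + m).choose i : R) * (-1) ^ i * (y + i) ^ j) * hsq
    _ = 0 := by rw [hdiff, Pi.zero_apply, mul_zero]

theorem genChoose_neg (r : ℝ) (i : ℕ) :
    genChoose (-r) i = (-1) ^ i * (∏ j ∈ range i, (r + j)) / i.factorial := by
  simp only [genChoose, ← neg_add', prod_neg, card_range]

theorem genChoose_add_natCast_sub (r : ℝ) {i p : ℕ} (hi : i ≤ p) :
    genChoose (r + p) (p - i) = (∏ j ∈ Ico (i + 1) (p + 1), (r + j)) / (p - i).factorial := by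
  rw [genChoose, prod_Ico_eq_prod_range, show p + 1 - (i + 1) = p - i by omega,
    ← prod_range_reflect (fun j : ℕ ↦ r + p - j)]
  congr 1
  refine prod_congr rfl fun j hj ↦ ?_
  have hsum : p - i - 1 - j + (i + 1 + j) = p := by have := mem_range.mp hj; omega
  have hcast := congrArg (Nat.cast : ℕ → ℝ) hsum
  push_cast at hcast ⊢
  linarith

theorem mul_genChoose_neg_mul_genChoose_add_natCast_sub (r : ℝ) {i p : ℕ} (hi : i ≤ p) :
    (r + i) * genChoose (-r) i * genChoose (r + p) (p - i) =
      (-1) ^ i * p.choose i * ((∏ j ∈ range (p + 1), (r + j)) / p.factorial) := by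
  rw [genChoose_neg, genChoose_add_natCast_sub r hi,
    ← prod_range_mul_prod_Ico _ (Nat.succ_le_succ hi), prod_range_succ,
    ← Nat.choose_mul_factorial_mul_factorial hi]
  have := (Nat.choose_pos hi).ne'
  have := i.factorial_ne_zero
  have := (p - i).factorial_ne_zero
  push_cast
  field_simp

theorem fractional_zero_sum_general (r : ℝ) (p : ℕ)
    (k : ℕ) (hk1 : 1 ≤ k) (hk2 : k ≤ p) :
    ∑ i ∈ Finset.range (p + 1),
      (r + i) ^ k * genChoose (-r) i * genChoose (r + p) (p - i) = 0 := by
  obtain ⟨m, rfl⟩ := Nat.exists_eq_add_of_le' hk1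
  calc ∑ i ∈ range (p + 1), (r + i) ^ (m + 1) * genChoose (-r) i * genChoose (r + p) (p - i)
      = ∑ i ∈ range (p + 1),
          (r + i) ^ m * ((r + i) * genChoose (-r) i * genChoose (r + p) (p - i)) :=
        sum_congr rfl fun i _ ↦ by ring
    _ = ((∏ j ∈ range (p + 1), (r + j)) / p.factorial) *
          ∑ i ∈ range (p + 1), (-1) ^ i * (p.choose i : ℝ) * (r + i) ^ m := by
        rw [mul_sum]
        refine sum_congr rfl fun i hi ↦ ?_
        rw [mul_genChoose_neg_mul_genChoose_add_natCast_sub r (mem_range_succ_iff.mp hi)]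
        ring
    _ = 0 := by rw [sum_range_neg_one_pow_mul_choose_mul_pow_eq_zero (by omega), mul_zero]

theorem fractional_zero_sum (r : ℝ) (p : ℕ) (hp : 1 ≤ p)
    (k : ℕ) (hk1 : 1 ≤ k) (hk2 : k ≤ p) :
    ∑ i ∈ Finset.range (p + 1),
      (r + i) ^ k * genChoose (-r) i * genChoose (r + p) (p - i) = 0 :=
  fractional_zero_sum_general r p k hk1 hk2
end

section
/- Let a be real, d a nonzero real, and k a positive integer with a_i = a + d(i-1) ≠ 0 for all i. If f is C^{k+1}, then f'(x) = (1/h)·Σ_{i=1}^k c_{a_i}·[f(x + a_i h) - f(x)] + O(h^k), where c_{a_i} = (1/a_i)·C(-a_1/d, i-1)·C(a_k/d, k-i). -/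
open Finset Polynomial Filter Asymptotics Topology

theorem genChoose_eq_prod_div (r : ℝ) (n : ℕ) :
    genChoose r n = ∏ l ∈ range n, (r - l) / (n - l) := by
  rw [genChoose, prod_div_distrib, prod_range_natCast_sub, ← Nat.descFactorial_eq_prod_range,
    Nat.descFactorial_self]

namespace Lagrange

variable {F ι : Type*} [Field F] [DecidableEq ι] {s : Finset ι} {v : ι → F}

theorem eval_zero_basis (i : ι) :
    (Lagrange.basis s v i).eval 0 = ∏ j ∈ s.erase i, v j / (v j - v i) := by
  refine eval_prod _ _ _ |>.trans (prod_congr rfl fun j _ ↦ ?_)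
  rw [basisDivisor, eval_mul, eval_C, eval_sub, eval_X, eval_C, div_eq_mul_inv, ← neg_sub, inv_neg]
  ring

theorem sum_eval_basis_mul_pow (hvs : Set.InjOn v s) {m : ℕ} (hm : m < #s) (x : F) :
    ∑ i ∈ s, (Lagrange.basis s v i).eval x * v i ^ m = x ^ m := by
  have hdeg : (X ^ m : F[X]).degree < #s := by
    rw [degree_X_pow]; exact_mod_cast hm
  have := congrArg (eval x) (eq_interpolate hvs hdeg)
  rw [interpolate_apply, eval_finsetSum, eval_pow, eval_X] at this
  simp only [eval_mul, eval_C, eval_pow, eval_X] at this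
  rw [this]
  exact sum_congr rfl fun i _ ↦ mul_comm _ _

end Lagrange

theorem eval_zero_basis_arithProg (a d : ℝ) (hd : d ≠ 0) (k : ℕ) (A : ℕ → ℝ)
    (hA : ∀ i, A i = a + d * ((i : ℝ) - 1)) {i : ℕ} (hi : i ∈ Icc 1 k) :
    (Lagrange.basis (Icc 1 k) A i).eval 0
      = genChoose (-(A 1) / d) (i - 1) * genChoose (A k / d) (k - i) := by
  obtain ⟨hi1, hik⟩ := mem_Icc.mp hi
  have hsplit : (Icc 1 k).erase i = Ico 1 i ∪ Ioc i k := by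
    ext j; simp only [mem_erase, mem_Icc, mem_union, mem_Ico, mem_Ioc]; omega
  have hdisj : Disjoint (Ico 1 i) (Ioc i k) := by
    rw [disjoint_left]; intro j h1 h2; simp only [mem_Ico, mem_Ioc] at h1 h2; omega
  have hAj : ∀ j : ℕ, A j = d * (a / d + j - 1) := fun j ↦ by
    rw [hA]; field_simp; ring
  have hratio : ∀ j : ℕ, A j / (A j - A i) = (a / d + j - 1) / (j - i) := fun j ↦ by
    rw [hAj, hAj, ← mul_sub, mul_div_mul_left _ _ hd]; congr 1; ring
  rw [Lagrange.eval_zero_basis, hsplit, prod_union hdisj, genChoose_eq_prod_div,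
    genChoose_eq_prod_div, hAj 1, hAj k, neg_div, mul_div_cancel_left₀ _ hd, mul_div_cancel_left₀ _ hd]
  congr 1
  · refine prod_nbij' (· - 1) (· + 1) (by simp; omega) (by simp; omega) (by simp; omega)
      (by simp) fun j hj ↦ ?_
    obtain ⟨hj1, hji⟩ := mem_Ico.mp hj
    rw [hratio, ← neg_div_neg_eq]
    congr 1 <;> push_cast [Nat.cast_sub hi1, Nat.cast_sub hj1] <;> ring
  · refine prod_nbij' (k - ·) (k - ·) (by simp; omega) (by simp; omega) (by simp; omega)
      (by simp; omega) fun j hj ↦ ?_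
    obtain ⟨hij, hjk⟩ := mem_Ioc.mp hj
    rw [hratio]
    congr 1 <;> push_cast [Nat.cast_sub hik, Nat.cast_sub hjk] <;> ring

theorem taylor_isBigO_univ {E : Type*} [NormedAddCommGroup E] [NormedSpace ℝ E]
    {f : ℝ → E} {x₀ : ℝ} {n : ℕ} (hf : ContDiff ℝ (n + 1) f) :
    (fun x ↦ f x - taylorWithinEval f n Set.univ x₀ x) =O[𝓝 x₀] fun x ↦ (x - x₀) ^ (n + 1) := by
  have hlittle := taylor_isLittleO_univ (x₀ := x₀) (n := n + 1) (by exact_mod_cast hf)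
  have hterm : (fun x ↦ (((n + 1 : ℝ) * n.factorial)⁻¹ * (x - x₀) ^ (n + 1)) •
      iteratedDerivWithin (n + 1) f Set.univ x₀) =O[𝓝 x₀] fun x ↦ (x - x₀) ^ (n + 1) :=
    ((isBigO_refl _ _).const_mul_left _).smul (isBigO_const_one ℝ _ _) |>.congr_right (by simp)
  refine (hlittle.isBigO.add hterm).congr_left fun x ↦ ?_
  rw [taylorWithinEval_succ]
  abel

theorem taylorWithinEval_univ_add_sub_self {f : ℝ → ℝ} (n : ℕ) (x t : ℝ) :
    taylorWithinEval f n Set.univ x (x + t) - f x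
      = ∑ m ∈ range n, ((m + 1).factorial : ℝ)⁻¹ * t ^ (m + 1) * iteratedDeriv (m + 1) f x := by
  simp [taylor_within_apply, sum_range_succ', iteratedDerivWithin_univ]

theorem taylor_remainder_comp_mul_isBigO {E : Type*} [NormedAddCommGroup E] [NormedSpace ℝ E]
    {f : ℝ → E} {x : ℝ} {n : ℕ} (hf : ContDiff ℝ (n + 1) f) (a : ℝ) :
    (fun h ↦ f (x + a * h) - taylorWithinEval f n Set.univ x (x + a * h)) =O[𝓝 0]
      fun h ↦ h ^ (n + 1) := by
  have hline : Tendsto (fun h ↦ x + a * h) (𝓝 0) (𝓝 x) := by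
    simpa using ((tendsto_id (x := 𝓝 (0 : ℝ))).const_mul a).const_add x
  refine ((taylor_isBigO_univ hf).comp_tendsto hline).trans ?_
  exact ((isBigO_refl _ _).const_mul_left (a ^ (n + 1))).congr_left fun h ↦ by
    simp only [Function.comp, add_sub_cancel_left, mul_pow]

theorem deriv_sub_stencil_isBigO {ι : Type*} (s : Finset ι) (A c : ι → ℝ) {k : ℕ} (hk : 0 < k)
    (hmom : ∀ m < k, ∑ i ∈ s, c i * A i ^ (m + 1) = 0 ^ m)
    {f : ℝ → ℝ} (hf : ContDiff ℝ (k + 1) f) (x : ℝ) :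
    (fun h ↦ deriv f x - h⁻¹ * ∑ i ∈ s, c i * (f (x + A i * h) - f x)) =O[𝓝[≠] 0]
      fun h ↦ h ^ k := by
  set R : ι → ℝ → ℝ := fun i h ↦ f (x + A i * h) - taylorWithinEval f k Set.univ x (x + A i * h)
  have htaylor : ∀ h, ∑ i ∈ s, c i * (taylorWithinEval f k Set.univ x (x + A i * h) - f x)
      = h * deriv f x := by
    intro h
    simp only [taylorWithinEval_univ_add_sub_self, mul_sum]
    rw [sum_comm]
    have hcoef : ∀ m ∈ range k, ∑ i ∈ s, c i * (((m + 1).factorial : ℝ)⁻¹ * (A i * h) ^ (m + 1)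
        * iteratedDeriv (m + 1) f x)
        = ((m + 1).factorial : ℝ)⁻¹ * h ^ (m + 1) * iteratedDeriv (m + 1) f x * 0 ^ m := by
      intro m hm
      rw [← hmom m (mem_range.mp hm), mul_sum]
      exact sum_congr rfl fun i _ ↦ by ring
    rw [sum_congr rfl hcoef, sum_eq_single_of_mem 0 (mem_range.mpr hk) fun m _ hm ↦ by simp [hm]]
    simp
  have herror : ∀ h ≠ 0, deriv f x - h⁻¹ * ∑ i ∈ s, c i * (f (x + A i * h) - f x)
      = -(h⁻¹ * ∑ i ∈ s, c i * R i h) := by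
    intro h hh
    have : ∑ i ∈ s, c i * (f (x + A i * h) - f x) = h * deriv f x + ∑ i ∈ s, c i * R i h := by
      rw [← htaylor h, ← sum_add_distrib]
      exact sum_congr rfl fun i _ ↦ by ring
    rw [this]
    field_simp
    ring
  have hrem : (fun h ↦ ∑ i ∈ s, c i * R i h) =O[𝓝[≠] 0] fun h ↦ h ^ (k + 1) :=
    IsBigO.fun_sum fun i _ ↦
      ((taylor_remainder_comp_mul_isBigO hf (A i)).const_mul_left (c i)).mono nhdsWithin_le_nhds
  refine (((isBigO_refl (·⁻¹) _).mul hrem).neg_left.congr' ?_ ?_)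
  · filter_upwards [self_mem_nhdsWithin] with h hh using (herror h hh).symm
  · filter_upwards [self_mem_nhdsWithin] with h (hh : h ≠ 0)
    field_simp
    ring

theorem exists_bound_of_isBigO_nhdsGT_pow {f : ℝ → ℝ} {k : ℕ}
    (hf : f =O[𝓝[>] 0] fun h ↦ h ^ k) :
    ∃ C > 0, ∃ h₀ > 0, ∀ h : ℝ, 0 < h → h ≤ h₀ → |f h| ≤ C * h ^ k := by
  obtain ⟨C, hC, hCf⟩ := hf.exists_pos
  obtain ⟨h₀, hh₀, hsub⟩ := mem_nhdsGT_iff_exists_Ioc_subset.mp hCf.bound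
  refine ⟨C, hC, h₀, hh₀, fun h hpos hle ↦ ?_⟩
  simpa [abs_of_pos hpos] using hsub ⟨hpos, hle⟩

theorem arithmetic_difference_order_k (a d : ℝ) (hd : d ≠ 0) (k : ℕ) (hk : 1 ≤ k)
    (A : ℕ → ℝ) (hA : ∀ i, A i = a + d * ((i : ℝ) - 1))
    (hA0 : ∀ i ∈ Finset.Icc 1 k, A i ≠ 0)
    (f : ℝ → ℝ) (hf : ContDiff ℝ (k + 1) f)
    (c : ℕ → ℝ)
    (hc : ∀ i, c i = (1 / A i) * genChoose (-(A 1) / d) (i - 1) * genChoose (A k / d) (k - i))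
    (x : ℝ) :
    ∃ C > 0, ∃ h₀ > 0, ∀ h : ℝ, 0 < h → h ≤ h₀ →
      |deriv f x - (1 / h) * ∑ i ∈ Finset.Icc 1 k, c i * (f (x + A i * h) - f x)|
        ≤ C * h ^ k := by
  have hinj : Set.InjOn A (Icc 1 k) := fun p _ q _ hpq ↦ by
    rw [hA, hA] at hpq
    exact_mod_cast sub_left_inj.mp (mul_left_cancel₀ hd (add_left_cancel hpq))
  have hmom : ∀ m < k, ∑ i ∈ Icc 1 k, c i * A i ^ (m + 1) = 0 ^ m := by
    intro m hm
    rw [← Lagrange.sum_eval_basis_mul_pow hinj (by simpa using hm) 0]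
    refine sum_congr rfl fun i hi ↦ ?_
    rw [hc, eval_zero_basis_arithProg a d hd k A hA hi]
    field_simp [hA0 i hi]
    ring
  simpa only [one_div] using exists_bound_of_isBigO_nhdsGT_pow
    ((deriv_sub_stencil_isBigO _ A c hk hmom hf x).mono (nhdsGT_le_nhdsNE 0))
end
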